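/- Non-Markovianity can increase under local (time-local) superprocesses: for Υ = |0⟩⟨0|_B ⊗ (1/2)(|0⟩⟨0|_C ⊗ Φ_{AD} + |1⟩⟨1|_C ⊗ (𝕀/2)_A ⊗ (𝕀/2)_D) and Υ' = Φ_{AD} ⊗ (𝕀/4)_{BC}, the mutual-information-based quantities satisfy N(Υ) = H(Υ_{AB}) + H(Υ_{CD}) − H(Υ) = 1 and N(Υ') = H(Υ'_{AB}) + H(Υ'_{CD}) − H(Υ') = 2, so N(Υ') > N(Υ). -/

import Mathlib

open Matrix Kronecker
open scoped ComplexOrder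

noncomputable section

/-- Base-2 matrix logarithm of a Hermitian matrix, via the spectral theorem
(with the convention `log 0 = 0`); `0` on non-Hermitian matrices. -/
def mlog2 {n : Type*} [Fintype n] [DecidableEq n] (A : Matrix n n ℂ) : Matrix n n ℂ :=
  if h : A.IsHermitian then
    (h.eigenvectorUnitary : Matrix n n ℂ) *
      Matrix.diagonal (fun i => (Real.logb 2 (h.eigenvalues i) : ℂ)) *
      (star h.eigenvectorUnitary : Matrix n n ℂ)
  else 0

/-- Quantum relative entropy `S(ρ‖σ) = Tr[ρ (log₂ ρ − log₂ σ)]`. -/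
def relEnt {n : Type*} [Fintype n] [DecidableEq n] (ρ σ : Matrix n n ℂ) : ℝ :=
  (Matrix.trace (ρ * (mlog2 ρ - mlog2 σ))).re

/-- Von Neumann entropy `H(ρ) = −Tr[ρ log₂ ρ]`. -/
def vnEnt {n : Type*} [Fintype n] [DecidableEq n] (ρ : Matrix n n ℂ) : ℝ :=
  -(Matrix.trace (ρ * mlog2 ρ)).re

/-- A density matrix: positive semidefinite with unit trace. -/
def IsDensity {n : Type*} [Fintype n] (ρ : Matrix n n ℂ) : Prop :=
  ρ.PosSemidef ∧ ρ.trace = 1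

/-- Partial trace over the second (B) factor. -/
def ptraceB {m n : Type*} [Fintype n] (M : Matrix (m × n) (m × n) ℂ) : Matrix m m ℂ :=
  Matrix.of fun i j => ∑ k, M (i, k) (j, k)

/-- Partial trace over the first (A) factor. -/
def ptraceA {m n : Type*} [Fintype m] (M : Matrix (m × n) (m × n) ℂ) : Matrix n n ℂ :=
  Matrix.of fun a b => ∑ k, M (k, a) (k, b)

/-- The Choi state `(id ⊗ M)(Φ)` of a map `M : M_d(ℂ) → M_{d'}(ℂ)`, where
`Φ = (1/d) ∑_{i,j} |ii⟩⟨jj|` is the maximally entangled state. -/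
def ChoiOf {d d' : ℕ} (M : Matrix (Fin d) (Fin d) ℂ → Matrix (Fin d') (Fin d') ℂ) :
    Matrix (Fin d × Fin d') (Fin d × Fin d') ℂ :=
  Matrix.of fun p q =>
    ((d : ℂ))⁻¹ * M (Matrix.single p.1 q.1 1) p.2 q.2

/-- Complete positivity of a linear map on matrices: every finite ancilla
extension `id_k ⊗ M` maps positive semidefinite matrices to positive
semidefinite matrices. -/
def IsCompletelyPositive {n m : Type*} [Fintype n] [DecidableEq n] [Fintype m] [DecidableEq m]
    (M : Matrix n n ℂ →ₗ[ℂ] Matrix m m ℂ) : Prop :=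
  ∀ (k : ℕ) (X : Matrix (Fin k × n) (Fin k × n) ℂ), X.PosSemidef →
    (Matrix.of fun (p q : Fin k × m) =>
      M (Matrix.of fun a b => X (p.1, a) (q.1, b)) p.2 q.2).PosSemidef

/-- The classical-quantum state `∑_x p_x |x⟩⟨x| ⊗ ρ_x`. -/
def cqState {ι m : Type*} [DecidableEq ι] (p : ι → ℝ) (ρ : ι → Matrix m m ℂ) :
    Matrix (ι × m) (ι × m) ℂ :=
  Matrix.of fun x y => if x.1 = y.1 then (p x.1 : ℂ) * ρ x.1 x.2 y.2 else 0

/-- The maximally entangled two-qubit state `Φ = (1/2) ∑_{i,j} |ii⟩⟨jj|`. -/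
def Phi2 : Matrix (Fin 2 × Fin 2) (Fin 2 × Fin 2) ℂ :=
  Matrix.of fun p q => if p.1 = p.2 ∧ q.1 = q.2 then (1 / 2 : ℂ) else 0

end

noncomputable section
/-- The Choi state `Υ = |0⟩⟨0|_B ⊗ (1/2)(|0⟩⟨0|_C ⊗ Φ_{AD} + |1⟩⟨1|_C ⊗ 𝕀/2 ⊗ 𝕀/2)`,
with index grouping `((a,b),(c,d))`. -/
def Y1 : Matrix ((Fin 2 × Fin 2) × (Fin 2 × Fin 2)) ((Fin 2 × Fin 2) × (Fin 2 × Fin 2)) ℂ :=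
  Matrix.of fun x y =>
    (if x.1.2 = 0 ∧ y.1.2 = 0 then 1 else 0) *
      ((1 / 2 : ℂ) *
        ((if x.2.1 = 0 ∧ y.2.1 = 0 then Phi2 (x.1.1, x.2.2) (y.1.1, y.2.2) else 0) +
          (if x.2.1 = 1 ∧ y.2.1 = 1 then
            (if x.1.1 = y.1.1 ∧ x.2.2 = y.2.2 then (1 / 4 : ℂ) else 0) else 0)))

/-- The Choi state `Υ' = Φ_{AD} ⊗ (𝕀/4)_{BC}` after the local superprocess. -/
def Y2 : Matrix ((Fin 2 × Fin 2) × (Fin 2 × Fin 2)) ((Fin 2 × Fin 2) × (Fin 2 × Fin 2)) ℂ :=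
  Matrix.of fun x y =>
    Phi2 (x.1.1, x.2.2) (y.1.1, y.2.2) *
      (if x.1.2 = y.1.2 ∧ x.2.1 = y.2.1 then (1 / 4 : ℂ) else 0)

/-- The mutual-information-based non-Markovianity quantifier
`N(Υ) = H(Υ_AB) + H(Υ_CD) − H(Υ)`. -/
def NMI (Υ : Matrix ((Fin 2 × Fin 2) × (Fin 2 × Fin 2)) ((Fin 2 × Fin 2) × (Fin 2 × Fin 2)) ℂ) : ℝ :=
  vnEnt (ptraceB Υ) + vnEnt (ptraceA Υ) - vnEnt Υ
end


/-!
Each of the six states is `2⁻³` times an integer matrix annihilated by a polynomial whose roots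
are `0` and powers of `1/2`. On such a spectrum `x ↦ x log₂ x` agrees with a polynomial `q`, so by
the functional calculus `H(ρ) = -Tr q(ρ)` is a combination of `Tr ρ` and `Tr ρ²`. The polynomial
identities and traces are exact integer matrix computations.
-/

open Polynomial

theorem Real.logb_two_inv_pow (k : ℕ) : Real.logb 2 ((2 ^ k)⁻¹) = -k := by
  rw [Real.logb_inv, Real.logb_pow, Real.logb_self_eq_one one_lt_two, mul_one]

namespace Matrix

section Entropy

variable {n : Type*} [Fintype n] [DecidableEq n]

theorem IsHermitian.mlog2_eq_cfc {A : Matrix n n ℂ} (hA : A.IsHermitian) :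
    mlog2 A = cfc (Real.logb 2) A := by
  rw [mlog2, dif_pos hA, hA.cfc_eq, IsHermitian.cfc, Unitary.conjStarAlgAut_apply]
  rfl

theorem IsHermitian.mul_mlog2_eq_cfc {A : Matrix n n ℂ} (hA : A.IsHermitian) :
    A * mlog2 A = cfc (fun x => x * Real.logb 2 x) A := by
  have hfin := A.finite_real_spectrum
  rw [hA.mlog2_eq_cfc, cfc_mul _ _ A (hfin.continuousOn _) (hfin.continuousOn _),
    cfc_id' ℝ A hA.isSelfAdjoint]

theorem IsHermitian.eval_eq_zero_of_aeval_eq_zero {A : Matrix n n ℂ} (hA : A.IsHermitian)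
    {p : ℝ[X]} (hp : aeval A p = 0) {x : ℝ} (hx : x ∈ spectrum ℝ A) : p.eval x = 0 := by
  have : cfc p.eval A = cfc (0 : ℝ → ℝ) A := by
    rw [cfc_polynomial (R := ℝ) p A hA.isSelfAdjoint, hp, cfc_zero]
  exact (cfc_eq_cfc_iff_eqOn hA.isSelfAdjoint).mp this hx

theorem IsHermitian.vnEnt_eq_neg_re_trace_aeval {A : Matrix n n ℂ} (hA : A.IsHermitian)
    (q : ℝ[X]) (hq : ∀ x ∈ spectrum ℝ A, x * Real.logb 2 x = q.eval x) :
    vnEnt A = -(aeval A q).trace.re := by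
  rw [vnEnt, hA.mul_mlog2_eq_cfc, cfc_congr hq, cfc_polynomial q A hA.isSelfAdjoint]

theorem IsHermitian.vnEnt_eq_of_mul_self_eq_smul {A : Matrix n n ℂ} (hA : A.IsHermitian) {c : ℝ}
    (h : A * A = c • A) : vnEnt A = -(Real.logb 2 c * A.trace.re) := by
  have hspec (x) (hx : x ∈ spectrum ℝ A) : x = 0 ∨ x = c := by
    have hp : aeval A (X * (X - C c)) = 0 := by
      simp [Algebra.algebraMap_eq_smul_one, mul_sub, h]
    simpa [sub_eq_zero] using hA.eval_eq_zero_of_aeval_eq_zero hp hx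
  rw [hA.vnEnt_eq_neg_re_trace_aeval (C (Real.logb 2 c) * X)]
  · rw [map_mul, aeval_C, aeval_X, ← Algebra.smul_def, trace_smul, Complex.smul_re, smul_eq_mul]
  · intro x hx
    rcases hspec x hx with rfl | rfl <;> simp only [eval_mul, eval_C, eval_X] <;> ring

theorem IsHermitian.vnEnt_eq_of_mul_self_mul_self_eq {A : Matrix n n ℂ} (hA : A.IsHermitian)
    {b c α β : ℝ} (h : A * A * A = (b + c) • (A * A) - (b * c) • A)
    (hb : α + β * b = Real.logb 2 b) (hc : α + β * c = Real.logb 2 c) :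
    vnEnt A = -(α * A.trace.re + β * (A * A).trace.re) := by
  have hspec (x) (hx : x ∈ spectrum ℝ A) : x = 0 ∨ x = b ∨ x = c := by
    have hp : aeval A (X * (X - C b) * (X - C c)) = 0 := by
      simp only [map_mul, map_sub, aeval_X, aeval_C, Algebra.algebraMap_eq_smul_one, mul_sub,
        sub_mul, mul_smul_comm, smul_mul_assoc, mul_one, smul_smul, h]
      module
    simpa [sub_eq_zero, or_assoc] using hA.eval_eq_zero_of_aeval_eq_zero hp hx
  rw [hA.vnEnt_eq_neg_re_trace_aeval (C α * X + C β * X ^ 2)]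
  · simp only [map_add, map_mul, aeval_C, aeval_X, ← Algebra.smul_def, sq, trace_add, trace_smul,
      Complex.add_re, Complex.smul_re, smul_eq_mul]
  · intro x hx
    rcases hspec x hx with rfl | rfl | rfl <;>
      simp only [eval_add, eval_mul, eval_C, eval_X, eval_pow]
    · ring
    · linear_combination -x * hb
    · linear_combination -x * hc

end Entropy

section IntCast

variable {n : Type*}

theorem map_intCast_nsmul (k : ℕ) (Z : Matrix n n ℤ) :
    (k • Z).map (Int.cast : ℤ → ℂ) = (k : ℝ) • Z.map Int.cast := by
  ext i j
  simp only [map_apply, smul_apply]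
  simp [Complex.real_smul]

theorem isHermitian_smul_map_intCast {Z : Matrix n n ℤ} (hZ : Zᵀ = Z) (s : ℝ) :
    (s • Z.map (Int.cast : ℤ → ℂ)).IsHermitian := by
  refine IsHermitian.ext fun i j => ?_
  simp [← congrFun (congrFun hZ i) j]

variable [Fintype n]

theorem map_intCast_mul (Z W : Matrix n n ℤ) :
    (Z * W).map (Int.cast : ℤ → ℂ) = Z.map Int.cast * W.map Int.cast :=
  Matrix.map_mul (f := Int.castRingHom ℂ)

theorem trace_map_intCast (Z : Matrix n n ℤ) : (Z.map (Int.cast : ℤ → ℂ)).trace = Z.trace :=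
  (AddMonoidHom.map_trace (Int.castAddHom ℂ) Z).symm

theorem vnEnt_inv_two_pow_smul_map_intCast [DecidableEq n] {Z : Matrix n n ℤ} (hZ : Zᵀ = Z)
    {j m : ℕ} (hsq : Z * Z = 2 ^ j • Z) (htr : Z.trace = 2 ^ m) :
    vnEnt (((2 : ℝ) ^ m)⁻¹ • Z.map (Int.cast : ℤ → ℂ)) = m - j := by
  set s : ℝ := ((2 : ℝ) ^ m)⁻¹
  have hsq' : (s • Z.map (Int.cast : ℤ → ℂ)) * (s • Z.map Int.cast)
      = (s * 2 ^ j) • (s • Z.map (Int.cast : ℤ → ℂ)) := by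
    rw [smul_mul_smul_comm, ← map_intCast_mul, hsq, map_intCast_nsmul, smul_smul, smul_smul]
    push_cast
    ring_nf
  have hre : (s • ((2 ^ m : ℤ) : ℂ)).re = 1 := by simp [s]
  rw [(isHermitian_smul_map_intCast hZ s).vnEnt_eq_of_mul_self_eq_smul hsq', trace_smul,
    trace_map_intCast, htr, hre, Real.logb_mul (by positivity) (by positivity),
    Real.logb_two_inv_pow, Real.logb_pow, Real.logb_self_eq_one one_lt_two]
  ring

end IntCast

section PartialTrace

variable {m n R : Type*} [AddCommMonoid R]

def traceRight [Fintype n] (M : Matrix (m × n) (m × n) R) : Matrix m m R :=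
  of fun i j => ∑ k, M (i, k) (j, k)

def traceLeft [Fintype m] (M : Matrix (m × n) (m × n) R) : Matrix n n R :=
  of fun a b => ∑ k, M (k, a) (k, b)

theorem ptraceB_smul_map_intCast [Fintype n] (s : ℝ) (Z : Matrix (m × n) (m × n) ℤ) :
    ptraceB (s • Z.map (Int.cast : ℤ → ℂ)) = s • (traceRight Z).map (Int.cast : ℤ → ℂ) := by
  ext i j
  simp [ptraceB, traceRight, Finset.smul_sum]

theorem ptraceA_smul_map_intCast [Fintype m] (s : ℝ) (Z : Matrix (m × n) (m × n) ℤ) :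
    ptraceA (s • Z.map (Int.cast : ℤ → ℂ)) = s • (traceLeft Z).map (Int.cast : ℤ → ℂ) := by
  ext i j
  simp [ptraceA, traceLeft, Finset.smul_sum]

end PartialTrace

end Matrix

open Matrix

abbrev Qubit4 := (Fin 2 × Fin 2) × (Fin 2 × Fin 2)

def Y1Int : Matrix Qubit4 Qubit4 ℤ :=
  of fun x y =>
    (if x.1.2 = 0 ∧ y.1.2 = 0 then 1 else 0) *
      ((if x.2.1 = 0 ∧ y.2.1 = 0 then (if x.1.1 = x.2.2 ∧ y.1.1 = y.2.2 then 2 else 0) else 0) +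
        (if x.2.1 = 1 ∧ y.2.1 = 1 then (if x.1.1 = y.1.1 ∧ x.2.2 = y.2.2 then 1 else 0) else 0))

def Y2Int : Matrix Qubit4 Qubit4 ℤ :=
  of fun x y =>
    (if x.1.1 = x.2.2 ∧ y.1.1 = y.2.2 then 1 else 0) *
      (if x.1.2 = y.1.2 ∧ x.2.1 = y.2.1 then 1 else 0)

theorem Y1_eq_smul : Y1 = ((2 : ℝ) ^ 3)⁻¹ • Y1Int.map (Int.cast : ℤ → ℂ) := by
  ext x y
  simp only [Y1, Y1Int, Phi2, of_apply, Matrix.smul_apply, map_apply]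
  split_ifs <;> norm_num

theorem Y2_eq_smul : Y2 = ((2 : ℝ) ^ 3)⁻¹ • Y2Int.map (Int.cast : ℤ → ℂ) := by
  ext x y
  simp only [Y2, Y2Int, Phi2, of_apply, Matrix.smul_apply, map_apply]
  split_ifs <;> norm_num

theorem Y1_mul_self_mul_self :
    Y1 * Y1 * Y1 = (((2 : ℝ) ^ 1)⁻¹ + ((2 : ℝ) ^ 3)⁻¹) • (Y1 * Y1)
      - (((2 : ℝ) ^ 1)⁻¹ * ((2 : ℝ) ^ 3)⁻¹) • Y1 := by
  have hZ : Y1Int * Y1Int * Y1Int = 5 • (Y1Int * Y1Int) - 4 • Y1Int := by decide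
  have hM : Y1Int.map (Int.cast : ℤ → ℂ) * Y1Int.map Int.cast * Y1Int.map Int.cast
      = (5 : ℝ) • (Y1Int.map (Int.cast : ℤ → ℂ) * Y1Int.map Int.cast)
        - (4 : ℝ) • Y1Int.map (Int.cast : ℤ → ℂ) := by
    rw [← map_intCast_mul, ← map_intCast_mul, hZ, Matrix.map_sub _ Int.cast_sub,
      map_intCast_nsmul, map_intCast_nsmul, map_intCast_mul]
    norm_num
  rw [Y1_eq_smul]
  simp only [Matrix.smul_mul, Matrix.mul_smul, smul_smul, hM]
  module

theorem trace_Y1 : Y1.trace = 1 := by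
  rw [Y1_eq_smul, trace_smul, trace_map_intCast, (by decide : Y1Int.trace = 8)]
  norm_num

theorem trace_Y1_mul_self : (Y1 * Y1).trace = 5 / 16 := by
  rw [Y1_eq_smul, smul_mul_smul_comm, trace_smul, ← map_intCast_mul, trace_map_intCast,
    (by decide : (Y1Int * Y1Int).trace = 20)]
  norm_num

theorem vnEnt_Y1 : vnEnt Y1 = 2 := by
  have hY1 : Y1.IsHermitian := Y1_eq_smul ▸ isHermitian_smul_map_intCast (by decide) _
  -- `x log₂ x = -11/3 x + 16/3 x²` at `x = 1/2` and `x = 1/8`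
  rw [hY1.vnEnt_eq_of_mul_self_mul_self_eq Y1_mul_self_mul_self (α := -11 / 3) (β := 16 / 3),
    trace_Y1, trace_Y1_mul_self]
  · norm_num
  · rw [Real.logb_two_inv_pow]; norm_num
  · rw [Real.logb_two_inv_pow]; norm_num

theorem vnEnt_ptraceB_Y1 : vnEnt (ptraceB Y1) = 1 := by
  rw [Y1_eq_smul, ptraceB_smul_map_intCast,
    vnEnt_inv_two_pow_smul_map_intCast (j := 2) (by decide) (by decide) (by decide)]
  norm_num

theorem vnEnt_ptraceA_Y1 : vnEnt (ptraceA Y1) = 2 := by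
  rw [Y1_eq_smul, ptraceA_smul_map_intCast,
    vnEnt_inv_two_pow_smul_map_intCast (j := 1) (by decide) (by decide) (by decide)]
  norm_num

theorem vnEnt_Y2 : vnEnt Y2 = 2 := by
  rw [Y2_eq_smul, vnEnt_inv_two_pow_smul_map_intCast (j := 1) (by decide) (by decide) (by decide)]
  norm_num

theorem vnEnt_ptraceB_Y2 : vnEnt (ptraceB Y2) = 2 := by
  rw [Y2_eq_smul, ptraceB_smul_map_intCast,
    vnEnt_inv_two_pow_smul_map_intCast (j := 1) (by decide) (by decide) (by decide)]
  norm_num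

theorem vnEnt_ptraceA_Y2 : vnEnt (ptraceA Y2) = 2 := by
  rw [Y2_eq_smul, ptraceA_smul_map_intCast,
    vnEnt_inv_two_pow_smul_map_intCast (j := 1) (by decide) (by decide) (by decide)]
  norm_num

/-- non-Markovianity can increase under local superprocesses:
`N(Υ) = 1` and `N(Υ') = 2`, so `N(Υ') > N(Υ)`. -/
theorem nonMarkovianity_increases : NMI Y1 = 1 ∧ NMI Y2 = 2 ∧ NMI Y1 < NMI Y2 := by
  have h1 : NMI Y1 = 1 := by
    rw [NMI, vnEnt_ptraceB_Y1, vnEnt_ptraceA_Y1, vnEnt_Y1]; norm_num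
  have h2 : NMI Y2 = 2 := by
    rw [NMI, vnEnt_ptraceB_Y2, vnEnt_ptraceA_Y2, vnEnt_Y2]; norm_num
  exact ⟨h1, h2, by rw [h1, h2]; norm_num⟩
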